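/- If H is an L-quasiconvex subgroup of a group G with rational structure (L, A), then H is finitely generated. -/

import Mathlib

/-!
Write an element of `H` as the value of a word `w ∈ L`. Quasiconvexity attaches to every prefix
`p` of `w` a word `u` of length at most `K` with `π(pu) ∈ H`. Consecutive such points of `H`,
`π(pu)` and `π(pxu')` for a letter `x`, differ by `π(u)⁻¹ π(xu')`, an element of `H` that is a
quotient of two values of words of length at most `K + 1`. There are finitely many of those, and
telescoping along `w` shows that they generate `H`.
-/

def evalWord {A G : Type} [Group G] (a : A → G) (w : List A) : G :=
  (w.map a).prod

def IsRegularLang {A : Type} (L : Language A) : Prop :=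
  ∃ (σ : Type) (_ : Fintype σ) (M : DFA A σ), M.accepts = L

section

variable {A G : Type} [Group G] (a : A → G)

@[simp]
lemma evalWord_nil : evalWord a [] = 1 := rfl

@[simp]
lemma evalWord_cons (x : A) (w : List A) : evalWord a (x :: w) = a x * evalWord a w := by
  simp [evalWord]

@[simp]
lemma evalWord_append (v w : List A) : evalWord a (v ++ w) = evalWord a v * evalWord a w := by
  simp [evalWord]

def shortWordQuotients (K : ℕ) : Set G :=
  Set.image2 (fun x y => (evalWord a x)⁻¹ * evalWord a y)
    {x : List A | x.length ≤ K} {y : List A | y.length ≤ K + 1}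

lemma shortWordQuotients_finite [Finite A] (K : ℕ) : (shortWordQuotients a K).Finite :=
  (List.finite_length_le A K).image2 _ (List.finite_length_le A (K + 1))

lemma evalWord_append_mem_closure {H : Subgroup G} {K : ℕ} {p : List A}
    (hpre : ∀ q, q <+: p → ∃ v : List A, v.length ≤ K ∧ evalWord a (q ++ v) ∈ H)
    {u : List A} (hu : u.length ≤ K) (hpu : evalWord a (p ++ u) ∈ H) :
    evalWord a (p ++ u) ∈ Subgroup.closure (shortWordQuotients a K ∩ H) := by
  induction p using List.reverseRecOn generalizing u with
  | nil => exact Subgroup.subset_closure ⟨⟨[], Nat.zero_le K, u, Nat.le_succ_of_le hu, by simp⟩, hpu⟩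
  | append_singleton q x ih =>
    obtain ⟨v, hv, hqv⟩ := hpre q (List.prefix_append q [x])
    have hq := ih (fun r hr => hpre r (hr.trans (List.prefix_append q [x]))) hv hqv
    have hstep : (evalWord a (q ++ v))⁻¹ * evalWord a (q ++ [x] ++ u) ∈
        shortWordQuotients a K ∩ H :=
      ⟨⟨v, hv, x :: u, Nat.succ_le_succ hu, by simp [mul_assoc]⟩, H.mul_mem (H.inv_mem hqv) hpu⟩
    simpa using mul_mem hq (Subgroup.subset_closure hstep)

end

theorem fg_of_quasiconvex_general
    {A G : Type} [Fintype A] [Group G] (a : A → G)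
    (L : Language A)
    (hsur : ∀ g : G, ∃ w ∈ L, evalWord a w = g)
    (H : Subgroup G)
    (hqc : ∃ K : ℕ, 0 < K ∧ ∀ w ∈ L, evalWord a w ∈ H → ∀ p : List A, p <+: w →
      ∃ u : List A, u.length ≤ K ∧ evalWord a (p ++ u) ∈ H) :
    H.FG := by
  obtain ⟨K, -, hqc⟩ := hqc
  refine (Subgroup.fg_iff H).2
    ⟨shortWordQuotients a K ∩ H, le_antisymm ?_ ?_,
      (shortWordQuotients_finite a K).inter_of_left _⟩
  · exact (Subgroup.closure_le H).2 Set.inter_subset_right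
  · intro h hh
    obtain ⟨w, hwL, rfl⟩ := hsur h
    simpa using
      evalWord_append_mem_closure a (hqc w hwL hh) (u := []) (Nat.zero_le K) (by simpa using hh)

/-- An `L`-quasiconvex subgroup of a group with a rational structure is finitely generated. -/
theorem fg_of_quasiconvex
    {A G : Type} [Fintype A] [Group G] (a : A → G)
    (hinv : ∀ x : A, ∃ y : A, a y = (a x)⁻¹)
    (L : Language A) (hreg : IsRegularLang L)
    (hsur : ∀ g : G, ∃ w ∈ L, evalWord a w = g)
    (H : Subgroup G)
    (hqc : ∃ K : ℕ, 0 < K ∧ ∀ w ∈ L, evalWord a w ∈ H → ∀ p : List A, p <+: w →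
      ∃ u : List A, u.length ≤ K ∧ evalWord a (p ++ u) ∈ H) :
    H.FG :=
  fg_of_quasiconvex_general a L hsur H hqc
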